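/- arXiv:2212.13343 — 2 statements merged into one kernel-verified Lean document; each statement's English description precedes it below -/
import Mathlib

section
/- Let N ≥ 1 and M > 0. There exists a constant C = C(N,M) > 0 such that for every nonnegative function ρ ∈ L^∞(ℝ²) with ∫_{B_N} ρ dx ≥ M and every continuously differentiable function v : ℝ² → ℝ with ∇v ∈ L²(ℝ²) and √ρ·v ∈ L²(ℝ²), one has ‖v‖_{L²(B_N)} ≤ C‖√ρ v‖_{L²(ℝ²)} + C(‖ρ‖_{L^∞(ℝ²)}^{1/2} + 1)‖∇v‖_{L²(ℝ²)}. -/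
/-!
Integrating `v(x)² ≤ 2 v(y)² + 2 |v(x) - v(y)|²` against `ρ(y) dy dx` over `B_N × B_N` gives
`(∫_{B_N} ρ) ‖v‖²_{L²(B_N)} ≤ 2 |B_N| ‖√ρ v‖² + 2 ‖ρ‖_∞ ∫∫_{B_N × B_N} |v(x) - v(y)|²`,
and `∫_{B_N} ρ ≥ M` turns this into the estimate after taking square roots.

For the double integral, write `v(x) - v(y)` as the integral of `∇v` along the segment
`t ↦ t x + (1 - t) y`; Cauchy–Schwarz in `t` bounds it by
`diam² ∫₀¹ ∫∫ |∇v(t x + (1 - t) y)|² dx dy dt`. For each `t` one of the two coefficients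
`t`, `1 - t` is at least `1/2`, so changing variables in the corresponding point costs a factor
at most `2^d` and the inner double integral is at most `2^d |B_N| ‖∇v‖²_{L²}`.
-/

open MeasureTheory Real Set Metric

noncomputable section

abbrev E2 := EuclideanSpace ℝ (Fin 2)

open Module
open scoped ENNReal

theorem lintegral_sq_le_measure_univ_mul {α : Type*} [MeasurableSpace α] {μ : Measure α}
    {f : α → ℝ≥0∞} (hf : AEMeasurable f μ) :
    (∫⁻ x, f x ∂μ) ^ 2 ≤ μ univ * ∫⁻ x, f x ^ 2 ∂μ := by
  have h := ENNReal.lintegral_mul_le_Lp_mul_Lq μ Real.HolderConjugate.two_two hf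
    aemeasurable_const (g := fun _ => 1)
  simp only [mul_one, Pi.mul_apply, ENNReal.one_rpow, lintegral_const, one_mul] at h
  calc (∫⁻ x, f x ∂μ) ^ 2
      ≤ ((∫⁻ x, f x ^ (2 : ℝ) ∂μ) ^ (1 / 2 : ℝ) * μ univ ^ (1 / 2 : ℝ)) ^ 2 := by gcongr
    _ = μ univ * ∫⁻ x, f x ^ 2 ∂μ := by
      rw [mul_pow, ← ENNReal.rpow_natCast, ← ENNReal.rpow_natCast, ← ENNReal.rpow_mul,
        ← ENNReal.rpow_mul]
      norm_num [mul_comm]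

section Segment

variable {E F : Type*} [NormedAddCommGroup E] [NormedSpace ℝ E] [NormedAddCommGroup F]
  [NormedSpace ℝ F] [CompleteSpace F] {v : E → F}

theorem enorm_sub_le_lintegral_enorm_fderiv (hv : ContDiff ℝ 1 v) (x y : E) :
    ‖v x - v y‖ₑ ≤ ‖x - y‖ₑ * ∫⁻ t in Ioc (0 : ℝ) 1, ‖fderiv ℝ v (t • x + (1 - t) • y)‖ₑ := by
  have hderiv : ∀ t : ℝ, HasDerivAt (fun s : ℝ => v (s • x + (1 - s) • y))
      (fderiv ℝ v (t • x + (1 - t) • y) (x - y)) t := fun t => by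
    have hline : HasDerivAt (fun s : ℝ => s • x + (1 - s) • y) ((1 : ℝ) • x + (-1 : ℝ) • y) t :=
      ((hasDerivAt_id t).smul_const x).add (((hasDerivAt_id t).const_sub 1).smul_const y)
    rw [one_smul, neg_one_smul, ← sub_eq_add_neg] at hline
    exact ((hv.differentiable one_ne_zero _).hasFDerivAt).comp_hasDerivAt t hline
  have hcont : Continuous fun t : ℝ => fderiv ℝ v (t • x + (1 - t) • y) (x - y) :=
    ((hv.continuous_fderiv one_ne_zero).comp (by fun_prop)).clm_apply continuous_const
  have hftc : v x - v y = ∫ t in Ioc (0 : ℝ) 1, fderiv ℝ v (t • x + (1 - t) • y) (x - y) := by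
    rw [← intervalIntegral.integral_of_le zero_le_one,
      intervalIntegral.integral_eq_sub_of_hasDerivAt (fun t _ => hderiv t)
        (hcont.intervalIntegrable 0 1)]
    simp
  calc ‖v x - v y‖ₑ
      ≤ ∫⁻ t in Ioc (0 : ℝ) 1, ‖fderiv ℝ v (t • x + (1 - t) • y) (x - y)‖ₑ :=
        hftc ▸ enorm_integral_le_lintegral_enorm _
    _ ≤ ∫⁻ t in Ioc (0 : ℝ) 1, ‖x - y‖ₑ * ‖fderiv ℝ v (t • x + (1 - t) • y)‖ₑ := by
        gcongr with t
        exact (ContinuousLinearMap.le_opENorm _ _).trans_eq (mul_comm _ _)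
    _ = ‖x - y‖ₑ * ∫⁻ t in Ioc (0 : ℝ) 1, ‖fderiv ℝ v (t • x + (1 - t) • y)‖ₑ :=
        lintegral_const_mul' _ _ enorm_ne_top

theorem enorm_sub_sq_le_lintegral_enorm_fderiv_sq (hv : ContDiff ℝ 1 v) (x y : E) :
    ‖v x - v y‖ₑ ^ 2 ≤
      ‖x - y‖ₑ ^ 2 * ∫⁻ t in Ioc (0 : ℝ) 1, ‖fderiv ℝ v (t • x + (1 - t) • y)‖ₑ ^ 2 := by
  have hmeas : AEMeasurable (fun t : ℝ => ‖fderiv ℝ v (t • x + (1 - t) • y)‖ₑ)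
      (volume.restrict (Ioc 0 1)) :=
    ((hv.continuous_fderiv one_ne_zero).comp (by fun_prop)).enorm.aemeasurable
  calc ‖v x - v y‖ₑ ^ 2
      ≤ (‖x - y‖ₑ * ∫⁻ t in Ioc (0 : ℝ) 1, ‖fderiv ℝ v (t • x + (1 - t) • y)‖ₑ) ^ 2 := by
        gcongr; exact enorm_sub_le_lintegral_enorm_fderiv hv x y
    _ ≤ ‖x - y‖ₑ ^ 2 * ∫⁻ t in Ioc (0 : ℝ) 1, ‖fderiv ℝ v (t • x + (1 - t) • y)‖ₑ ^ 2 := by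
        rw [mul_pow]
        gcongr
        simpa using lintegral_sq_le_measure_univ_mul hmeas

end Segment

theorem enorm_sq_le_two_mul_enorm_sq_add_enorm_sub_sq {F : Type*} [NormedAddCommGroup F]
    (a b : F) :
    ‖a‖ₑ ^ 2 ≤ 2 * (‖b‖ₑ ^ 2 + ‖a - b‖ₑ ^ 2) := by
  have hmean := ENNReal.rpow_add_le_mul_rpow_add_rpow ‖b‖ₑ ‖a - b‖ₑ one_le_two
  norm_num at hmean
  calc ‖a‖ₑ ^ 2 ≤ (‖b‖ₑ + ‖a - b‖ₑ) ^ 2 := by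
        gcongr; simpa using enorm_add_le b (a - b)
    _ ≤ 2 * (‖b‖ₑ ^ 2 + ‖a - b‖ₑ ^ 2) := hmean

theorem lintegral_mul_lintegral_enorm_sq_le {α F : Type*} [MeasurableSpace α] {μ : Measure α}
    [NormedAddCommGroup F] {ρ : α → ℝ≥0∞} (hρ : AEMeasurable ρ μ) {R : ℝ≥0∞} (hR : R ≠ ⊤)
    (hρR : ∀ᵐ x ∂μ, ρ x ≤ R) {v : α → F} (hv : AEStronglyMeasurable v μ) (s : Set α) :
    (∫⁻ y in s, ρ y ∂μ) * ∫⁻ x in s, ‖v x‖ₑ ^ 2 ∂μ ≤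
      2 * μ s * ∫⁻ x in s, ρ x * ‖v x‖ₑ ^ 2 ∂μ +
        2 * R * ∫⁻ y in s, ∫⁻ x in s, ‖v x - v y‖ₑ ^ 2 ∂μ ∂μ := by
  have hρV : AEMeasurable (fun y => ρ y * ‖v y‖ₑ ^ 2) (μ.restrict s) :=
    hρ.restrict.mul (hv.restrict.enorm.pow_const 2)
  calc (∫⁻ y in s, ρ y ∂μ) * ∫⁻ x in s, ‖v x‖ₑ ^ 2 ∂μ
      = ∫⁻ y in s, ρ y * ∫⁻ x in s, ‖v x‖ₑ ^ 2 ∂μ ∂μ :=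
        (lintegral_mul_const'' _ hρ.restrict).symm
    _ ≤ ∫⁻ y in s, ∫⁻ x in s, ρ y * ‖v x‖ₑ ^ 2 ∂μ ∂μ :=
        lintegral_mono fun y => lintegral_const_mul_le _ _
    _ ≤ ∫⁻ y in s, ∫⁻ x in s, 2 * (ρ y * ‖v y‖ₑ ^ 2) + 2 * R * ‖v x - v y‖ₑ ^ 2 ∂μ ∂μ := by
        refine lintegral_mono_ae ?_
        filter_upwards [ae_restrict_of_ae hρR] with y hy
        refine lintegral_mono fun x => ?_
        calc ρ y * ‖v x‖ₑ ^ 2 ≤ ρ y * (2 * (‖v y‖ₑ ^ 2 + ‖v x - v y‖ₑ ^ 2)) := by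
              gcongr; exact enorm_sq_le_two_mul_enorm_sq_add_enorm_sub_sq _ _
          _ = 2 * (ρ y * ‖v y‖ₑ ^ 2) + 2 * ρ y * ‖v x - v y‖ₑ ^ 2 := by ring
          _ ≤ 2 * (ρ y * ‖v y‖ₑ ^ 2) + 2 * R * ‖v x - v y‖ₑ ^ 2 := by gcongr
    _ = ∫⁻ y in s, 2 * (ρ y * ‖v y‖ₑ ^ 2) * μ s +
          2 * R * ∫⁻ x in s, ‖v x - v y‖ₑ ^ 2 ∂μ ∂μ := by
        refine lintegral_congr fun y => ?_
        rw [lintegral_add_left measurable_const, setLIntegral_const,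
          lintegral_const_mul' _ _ (by finiteness)]
    _ = 2 * μ s * ∫⁻ x in s, ρ x * ‖v x‖ₑ ^ 2 ∂μ +
          2 * R * ∫⁻ y in s, ∫⁻ x in s, ‖v x - v y‖ₑ ^ 2 ∂μ ∂μ := by
        rw [lintegral_add_left' ((hρV.const_mul 2).mul_const _),
          lintegral_const_mul' _ _ (by finiteness), lintegral_mul_const'' _ (hρV.const_mul 2),
          lintegral_const_mul'' _ hρV]
        ring

theorem integral_eq_toReal_lintegral_enorm {α : Type*} [MeasurableSpace α] {μ : Measure α}
    {f : α → ℝ} (hf0 : 0 ≤ᵐ[μ] f) (hf : AEStronglyMeasurable f μ) :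
    ∫ x, f x ∂μ = (∫⁻ x, ‖f x‖ₑ ∂μ).toReal := by
  rw [integral_eq_lintegral_of_nonneg_ae hf0 hf]
  congr 1
  refine lintegral_congr_ae ?_
  filter_upwards [hf0] with x hx
  exact (Real.enorm_eq_ofReal hx).symm

section Haar

variable {E : Type*} [NormedAddCommGroup E] [NormedSpace ℝ E] [FiniteDimensional ℝ E]
  [MeasurableSpace E] [BorelSpace E] (μ : Measure E) [μ.IsAddHaarMeasure]

theorem lintegral_comp_smul_add {g : E → ℝ≥0∞} (hg : Measurable g) {c : ℝ} (hc : c ≠ 0)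
    (b : E) :
    ∫⁻ x, g (c • x + b) ∂μ = ENNReal.ofReal |(c ^ finrank ℝ E)⁻¹| * ∫⁻ x, g x ∂μ := by
  rw [← lintegral_map (f := fun x => g (x + b)) (hg.comp (measurable_add_const b))
    (measurable_const_smul c), Measure.map_addHaar_smul μ hc, lintegral_smul_measure,
    lintegral_add_right_eq_self, smul_eq_mul]

theorem setLIntegral_comp_smul_add_le {g : E → ℝ≥0∞} (hg : Measurable g) {c : ℝ}
    (hc : 1 / 2 ≤ |c|) (b : E) (s : Set E) :
    ∫⁻ x in s, g (c • x + b) ∂μ ≤ 2 ^ finrank ℝ E * ∫⁻ x, g x ∂μ := by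
  have hc0 : 0 < |c| := by linarith
  have hjac : |(c ^ finrank ℝ E)⁻¹| ≤ 2 ^ finrank ℝ E := by
    rw [abs_inv, abs_pow, ← inv_pow]
    gcongr
    rw [inv_le_comm₀ hc0 two_pos]
    linarith
  calc ∫⁻ x in s, g (c • x + b) ∂μ ≤ ∫⁻ x, g (c • x + b) ∂μ := setLIntegral_le_lintegral _ _
    _ = ENNReal.ofReal |(c ^ finrank ℝ E)⁻¹| * ∫⁻ x, g x ∂μ :=
        lintegral_comp_smul_add μ hg (abs_pos.mp hc0) b
    _ ≤ 2 ^ finrank ℝ E * ∫⁻ x, g x ∂μ := by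
        gcongr
        exact (ENNReal.ofReal_le_ofReal hjac).trans_eq (by simp)

theorem lintegral_lintegral_comp_segment_le {g : E → ℝ≥0∞} (hg : Measurable g) {t : ℝ}
    (ht : t ∈ Icc (0 : ℝ) 1) (s : Set E) :
    ∫⁻ y in s, ∫⁻ x in s, g (t • x + (1 - t) • y) ∂μ ∂μ ≤
      2 ^ finrank ℝ E * μ s * ∫⁻ x, g x ∂μ := by
  rcases le_total (1 / 2) t with hhalf | hhalf
  · calc ∫⁻ y in s, ∫⁻ x in s, g (t • x + (1 - t) • y) ∂μ ∂μ
        ≤ ∫⁻ _ in s, 2 ^ finrank ℝ E * ∫⁻ x, g x ∂μ ∂μ := by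
          gcongr with y
          exact setLIntegral_comp_smul_add_le μ hg (by rwa [abs_of_nonneg ht.1]) _ s
      _ = 2 ^ finrank ℝ E * μ s * ∫⁻ x, g x ∂μ := by rw [setLIntegral_const]; ring
  · rw [lintegral_lintegral_swap (f := fun y x => g (t • x + (1 - t) • y)) (by fun_prop)]
    calc ∫⁻ x in s, ∫⁻ y in s, g (t • x + (1 - t) • y) ∂μ ∂μ
        ≤ ∫⁻ _ in s, 2 ^ finrank ℝ E * ∫⁻ x, g x ∂μ ∂μ := by
          gcongr with x
          simp_rw [add_comm (t • x)]
          exact setLIntegral_comp_smul_add_le μ hg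
            (by rw [abs_of_nonneg (by linarith [ht.2])]; linarith) _ s
      _ = 2 ^ finrank ℝ E * μ s * ∫⁻ x, g x ∂μ := by rw [setLIntegral_const]; ring


variable {F : Type*} [NormedAddCommGroup F] [NormedSpace ℝ F] [CompleteSpace F]

theorem lintegral_lintegral_enorm_sub_sq_le {v : E → F} (hv : ContDiff ℝ 1 v) {s : Set E}
    (hs : MeasurableSet s) :
    ∫⁻ y in s, ∫⁻ x in s, ‖v x - v y‖ₑ ^ 2 ∂μ ∂μ ≤
      2 ^ finrank ℝ E * ediam s ^ 2 * μ s * ∫⁻ x, ‖fderiv ℝ v x‖ₑ ^ 2 ∂μ := by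
  set g : E → ℝ≥0∞ := fun z => ‖fderiv ℝ v z‖ₑ ^ 2
  have hg : Measurable g := (hv.continuous_fderiv one_ne_zero).measurable.enorm.pow_const 2
  calc ∫⁻ y in s, ∫⁻ x in s, ‖v x - v y‖ₑ ^ 2 ∂μ ∂μ
      ≤ ∫⁻ y in s, ∫⁻ x in s, ediam s ^ 2 *
          (∫⁻ t in Ioc (0 : ℝ) 1, g (t • x + (1 - t) • y)) ∂μ ∂μ := by
        refine setLIntegral_mono' hs fun y hy => setLIntegral_mono' hs fun x hx => ?_
        refine (enorm_sub_sq_le_lintegral_enorm_fderiv_sq hv x y).trans ?_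
        gcongr
        rw [← edist_eq_enorm_sub]
        exact edist_le_ediam_of_mem hx hy
    _ = ediam s ^ 2 * ∫⁻ y in s, ∫⁻ x in s,
          ∫⁻ t in Ioc (0 : ℝ) 1, g (t • x + (1 - t) • y) ∂volume ∂μ ∂μ := by
        rw [← lintegral_const_mul _ (by fun_prop)]
        exact lintegral_congr fun y => lintegral_const_mul _ (by fun_prop)
    _ = ediam s ^ 2 * ∫⁻ y in s, ∫⁻ t in Ioc (0 : ℝ) 1,
          ∫⁻ x in s, g (t • x + (1 - t) • y) ∂μ ∂volume ∂μ := by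
        congr 1
        refine lintegral_congr fun y => lintegral_lintegral_swap
          (f := fun x t => g (t • x + (1 - t) • y)) (by fun_prop)
    _ = ediam s ^ 2 * ∫⁻ t in Ioc (0 : ℝ) 1,
          ∫⁻ y in s, ∫⁻ x in s, g (t • x + (1 - t) • y) ∂μ ∂μ := by
        congr 1
        exact lintegral_lintegral_swap
          (f := fun y t => ∫⁻ x in s, g (t • x + (1 - t) • y) ∂μ) (by fun_prop)
    _ ≤ ediam s ^ 2 * ∫⁻ t in Ioc (0 : ℝ) 1, 2 ^ finrank ℝ E * μ s * ∫⁻ x, g x ∂μ := by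
        gcongr 1
        exact setLIntegral_mono' measurableSet_Ioc fun t ht =>
          lintegral_lintegral_comp_segment_le μ hg (Ioc_subset_Icc_self ht) s
    _ = 2 ^ finrank ℝ E * ediam s ^ 2 * μ s * ∫⁻ x, g x ∂μ := by
        rw [setLIntegral_const, Real.volume_Ioc]; norm_num; ring

theorem setIntegral_mul_setIntegral_sq_le {ρ v : E → ℝ} (hρ0 : ∀ x, 0 ≤ ρ x) (hρ : MemLp ρ ⊤ μ)
    (hv : ContDiff ℝ 1 v) (hρv : Integrable (fun x => ρ x * v x ^ 2) μ)
    (hDv : Integrable (fun x => ‖fderiv ℝ v x‖ ^ 2) μ) {s : Set E} (hs : MeasurableSet s)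
    (hsb : Bornology.IsBounded s) :
    (∫ x in s, ρ x ∂μ) * ∫ x in s, v x ^ 2 ∂μ ≤
      2 * μ.real s * ∫ x, ρ x * v x ^ 2 ∂μ +
        2 * (eLpNorm ρ ⊤ μ).toReal * (2 ^ finrank ℝ E * diam s ^ 2 * μ.real s *
          ∫ x, ‖fderiv ℝ v x‖ ^ 2 ∂μ) := by
  have hρR : ∀ᵐ x ∂μ, ‖ρ x‖ₑ ≤ eLpNorm ρ ⊤ μ := by
    simpa only [eLpNorm_exponent_top] using ae_le_eLpNormEssSup
  have key : (∫⁻ x in s, ‖ρ x‖ₑ ∂μ) * ∫⁻ x in s, ‖v x‖ₑ ^ 2 ∂μ ≤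
      2 * μ s * ∫⁻ x, ‖ρ x‖ₑ * ‖v x‖ₑ ^ 2 ∂μ + 2 * eLpNorm ρ ⊤ μ *
        (2 ^ finrank ℝ E * ediam s ^ 2 * μ s * ∫⁻ x, ‖fderiv ℝ v x‖ₑ ^ 2 ∂μ) := by
    refine (lintegral_mul_lintegral_enorm_sq_le hρ.1.enorm hρ.eLpNorm_ne_top hρR
      hv.continuous.aestronglyMeasurable s).trans ?_
    gcongr
    · exact Measure.restrict_le_self
    · exact lintegral_lintegral_enorm_sub_sq_le μ hv hs
  have hρv_fin : ∫⁻ x, ‖ρ x‖ₑ * ‖v x‖ₑ ^ 2 ∂μ < ⊤ := by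
    simpa only [hasFiniteIntegral_iff_enorm, enorm_mul, enorm_pow] using hρv.2
  have hDv_fin : ∫⁻ x, ‖fderiv ℝ v x‖ₑ ^ 2 ∂μ < ⊤ := by
    simpa only [hasFiniteIntegral_iff_enorm, enorm_pow, enorm_norm] using hDv.2
  have hμs := hsb.measure_lt_top (μ := μ)
  have hdiam := hsb.ediam_ne_top
  have hR := hρ.eLpNorm_ne_top
  rw [integral_eq_toReal_lintegral_enorm (.of_forall hρ0) hρ.1.restrict,
    integral_eq_toReal_lintegral_enorm (.of_forall fun x => sq_nonneg (v x))
      (hv.continuous.pow 2).aestronglyMeasurable,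
    integral_eq_toReal_lintegral_enorm (.of_forall fun x => mul_nonneg (hρ0 x) (sq_nonneg _))
      hρv.1,
    integral_eq_toReal_lintegral_enorm (.of_forall fun x => sq_nonneg _) hDv.1]
  have hreal := ENNReal.toReal_mono (by finiteness) key
  rw [ENNReal.toReal_add (by finiteness) (by finiteness)] at hreal
  simp only [ENNReal.toReal_mul, ENNReal.toReal_pow, ENNReal.toReal_ofNat] at hreal
  simp only [enorm_mul, enorm_pow, enorm_norm]
  exact hreal

end Haar

theorem sqrt_add_le_sqrt_add_sqrt {x y : ℝ} (hx : 0 ≤ x) (hy : 0 ≤ y) : √(x + y) ≤ √x + √y := by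
  rw [Real.sqrt_le_iff]
  refine ⟨by positivity, ?_⟩
  nlinarith [Real.sq_sqrt hx, Real.sq_sqrt hy, Real.sqrt_nonneg x, Real.sqrt_nonneg y]

theorem sqrt_le_of_le_mul_add_mul {a b c R A B : ℝ} (hA : 0 ≤ A) (hB : 0 ≤ B) (hb : 0 ≤ b)
    (hc : 0 ≤ c) (hR : 0 ≤ R) (h : a ≤ A * b + B * (R * c)) :
    √a ≤ (√A + √B + 1) * √b + (√A + √B + 1) * (√R + 1) * √c := by
  calc √a ≤ √(A * b) + √(B * (R * c)) :=
        (Real.sqrt_le_sqrt h).trans (sqrt_add_le_sqrt_add_sqrt (by positivity) (by positivity))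
    _ = √A * √b + √B * √R * √c := by
        rw [Real.sqrt_mul hA, Real.sqrt_mul hB, Real.sqrt_mul hR, mul_assoc]
    _ ≤ (√A + √B + 1) * √b + (√A + √B + 1) * (√R + 1) * √c := by
        gcongr <;> nlinarith [Real.sqrt_nonneg A, Real.sqrt_nonneg B, Real.sqrt_nonneg R]

theorem ball_estimate_with_density_general (N M : ℝ) (hM : 0 < M) :
    ∃ C : ℝ, 0 < C ∧ ∀ ρ : E2 → ℝ, (∀ x, 0 ≤ ρ x) → MemLp ρ ⊤ volume →
      M ≤ ∫ x in ball (0 : E2) N, ρ x →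
      ∀ v : E2 → ℝ, ContDiff ℝ 1 v →
        Integrable (fun x => ‖fderiv ℝ v x‖ ^ 2) →
        Integrable (fun x => ρ x * (v x) ^ 2) →
        (∫ x in ball (0 : E2) N, (v x) ^ 2) ^ (1 / 2 : ℝ) ≤
          C * (∫ x : E2, ρ x * (v x) ^ 2) ^ (1 / 2 : ℝ) +
          C * ((eLpNorm ρ ⊤ volume).toReal ^ (1 / 2 : ℝ) + 1) *
            (∫ x : E2, ‖fderiv ℝ v x‖ ^ 2) ^ (1 / 2 : ℝ) := by
  set D := ball (0 : E2) N
  set A := 2 * volume.real D / M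
  set B := 2 * (2 ^ finrank ℝ E2 * diam D ^ 2 * volume.real D) / M
  refine ⟨√A + √B + 1, by positivity, fun ρ hρ0 hρ hρM v hv hDv hρv => ?_⟩
  have hkey := setIntegral_mul_setIntegral_sq_le volume hρ0 hρ hv hρv hDv
    (measurableSet_ball : MeasurableSet D) isBounded_ball
  have hbound : ∫ x in D, v x ^ 2 ≤
      A * (∫ x, ρ x * v x ^ 2) + B * ((eLpNorm ρ ⊤ volume).toReal * ∫ x, ‖fderiv ℝ v x‖ ^ 2) := by
    refine le_of_mul_le_mul_left ?_ hM
    calc M * ∫ x in D, v x ^ 2 ≤ (∫ x in D, ρ x) * ∫ x in D, v x ^ 2 := by gcongr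
      _ ≤ _ := hkey
      _ = _ := by simp only [A, B]; field_simp; ring
  simpa only [← Real.sqrt_eq_rpow] using sqrt_le_of_le_mul_add_mul (by positivity) (by positivity)
    (integral_nonneg fun x => mul_nonneg (hρ0 x) (sq_nonneg _))
    (integral_nonneg fun x => sq_nonneg _) ENNReal.toReal_nonneg hbound

/-- Poincaré-type estimate on the ball B_N for functions with positive mass of ρ
(inequality (e4) in Lemma 2.4 of the paper). -/
theorem ball_estimate_with_density (N M : ℝ) (hN : 1 ≤ N) (hM : 0 < M) :
    ∃ C : ℝ, 0 < C ∧ ∀ ρ : E2 → ℝ, (∀ x, 0 ≤ ρ x) → MemLp ρ ⊤ volume →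
      M ≤ ∫ x in ball (0 : E2) N, ρ x →
      ∀ v : E2 → ℝ, ContDiff ℝ 1 v →
        Integrable (fun x => ‖fderiv ℝ v x‖ ^ 2) →
        Integrable (fun x => ρ x * (v x) ^ 2) →
        (∫ x in ball (0 : E2) N, (v x) ^ 2) ^ (1 / 2 : ℝ) ≤
          C * (∫ x : E2, ρ x * (v x) ^ 2) ^ (1 / 2 : ℝ) +
          C * ((eLpNorm ρ ⊤ volume).toReal ^ (1 / 2 : ℝ) + 1) *
            (∫ x : E2, ‖fderiv ℝ v x‖ ^ 2) ^ (1 / 2 : ℝ) :=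
  ball_estimate_with_density_general N M hM
end
end

section
/- (Cancellation property of the momentum flux in ℝ².) Let μ > 0 and μ + λ ≥ 0. Let u : ℝ² → ℝ² be twice continuously differentiable with ∇u ∈ L²(ℝ²), and let P : ℝ² → ℝ be continuously differentiable with P ∈ L²(ℝ²). If the vector field F := μΔu + (μ+λ)∇(div u) − ∇P is integrable on ℝ², then ∫_{ℝ²} F(x) dx = 0. -/
/-!
Each component of the flux is a divergence, `Fⁱ = ∑ⱼ ∂ⱼσⁱʲ` with
`σⁱʲ = μ ∂ⱼuⁱ + (μ+λ) ∂ᵢuʲ − δᵢⱼ P` (symmetry of second derivatives turns `∑ⱼ ∂ⱼ∂ᵢuʲ` into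
`∂ᵢ div u`), and `σ ∈ L²`. Testing against the cutoff `χ_R = χ(·/R)` and integrating by parts,
`∫ χ_R Fⁱ = −∑ⱼ ∫ ∂ⱼχ_R σⁱʲ`. By Cauchy–Schwarz the right side is at most `‖∇χ_R‖_{L²}` times
the `L²` norm of `σ` outside the ball of radius `R`; in dimension at most two `‖∇χ_R‖_{L²}` stays
bounded as `R → ∞`, so the right side tends to `0` while the left side tends to `∫ Fⁱ`.
-/

open MeasureTheory Real Set Metric

noncomputable section

/-- The i-th standard basis vector of ℝ². -/
def e2 (i : Fin 2) : E2 := EuclideanSpace.single i (1 : ℝ)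

/-- Divergence of a vector field on ℝ²: div u = ∂₁u¹ + ∂₂u². -/
def div2 (u : E2 → E2) (x : E2) : ℝ := ∑ i, fderiv ℝ u x (e2 i) i

/-- Componentwise Laplacian of a vector field: (Δu)ⁱ = ∑ⱼ ∂ⱼ∂ⱼuⁱ. -/
def lapVec (u : E2 → E2) (x : E2) (i : Fin 2) : ℝ :=
  ∑ j, fderiv ℝ (fun y => fderiv ℝ u y (e2 j) i) x (e2 j)

/-- The momentum flux F = μΔu + (μ+λ)∇(div u) − ∇P. -/
def NSflux (μ lam : ℝ) (u : E2 → E2) (P : E2 → ℝ) (x : E2) : E2 :=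
  (EuclideanSpace.equiv (Fin 2) ℝ).symm fun i =>
    μ * lapVec u x i + (μ + lam) * fderiv ℝ (div2 u) x (e2 i) - fderiv ℝ P x (e2 i)

open Filter Topology Module

theorem abs_integral_mul_le_sqrt_mul_sqrt {α : Type*} [MeasurableSpace α] {μ : Measure α}
    {f g : α → ℝ} (hf : MemLp f 2 μ) (hg : MemLp g 2 μ) :
    |∫ x, f x * g x ∂μ| ≤ √(∫ x, f x ^ 2 ∂μ) * √(∫ x, g x ^ 2 ∂μ) := by
  have h2 : ENNReal.ofReal 2 = 2 := by norm_num
  have holder := integral_mul_le_Lp_mul_Lq_of_nonneg Real.HolderConjugate.two_two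
    (Eventually.of_forall fun x => abs_nonneg (f x))
    (Eventually.of_forall fun x => abs_nonneg (g x))
    (h2 ▸ hf.abs) (h2 ▸ hg.abs)
  simp only [Real.rpow_two, sq_abs, ← Real.sqrt_eq_rpow] at holder
  calc |∫ x, f x * g x ∂μ| ≤ ∫ x, |f x * g x| ∂μ := abs_integral_le_integral_abs
    _ = ∫ x, |f x| * |g x| ∂μ := by simp only [abs_mul]
    _ ≤ _ := holder

theorem tendsto_setIntegral_compl_ball_atTop {X F : Type*} [PseudoMetricSpace X]
    [MeasurableSpace X] [OpensMeasurableSpace X] [NormedAddCommGroup F] [NormedSpace ℝ F]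
    {μ : Measure X} {f : X → F} (hf : Integrable f μ) (x₀ : X) :
    Tendsto (fun R : ℝ => ∫ x in (ball x₀ R)ᶜ, f x ∂μ) atTop (𝓝 0) := by
  have h := tendsto_setIntegral_of_antitone (μ := μ) (f := f) (s := fun R : ℝ => (ball x₀ R)ᶜ)
    (fun R => measurableSet_ball.compl)
    (fun R R' h => compl_subset_compl.mpr (ball_subset_ball h)) ⟨0, hf.integrableOn⟩
  have h_cover : ⋃ R : ℝ, ball x₀ R = univ :=
    eq_univ_of_forall fun x => mem_iUnion.2 ⟨dist x x₀ + 1, by simp⟩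
  rwa [← compl_iUnion, h_cover, compl_univ, Measure.restrict_empty, integral_zero_measure] at h

section Cutoff

variable {E : Type*} [NormedAddCommGroup E] [InnerProductSpace ℝ E]

variable (E) in
def unitBump : ContDiffBump (0 : E) := ⟨1, 2, one_pos, one_lt_two⟩

def cutoff (R : ℝ) (x : E) : ℝ := unitBump E (R⁻¹ • x)

theorem contDiff_cutoff {n : ℕ∞} (R : ℝ) : ContDiff ℝ n (cutoff (E := E) R) :=
  (unitBump E).contDiff.comp (contDiff_const_smul R⁻¹)

theorem cutoff_nonneg (R : ℝ) (x : E) : 0 ≤ cutoff R x := (unitBump E).nonneg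

theorem cutoff_le_one (R : ℝ) (x : E) : cutoff R x ≤ 1 := (unitBump E).le_one

theorem cutoff_eq_one {R : ℝ} (hR : 0 < R) {x : E} (hx : ‖x‖ ≤ R) : cutoff R x = 1 := by
  refine (unitBump E).one_of_mem_closedBall ?_
  rw [mem_closedBall, dist_zero_right, norm_smul, norm_inv, Real.norm_of_nonneg hR.le]
  exact inv_mul_le_one_of_le₀ hx hR.le

theorem eventually_cutoff_eq_one (x : E) : ∀ᶠ R in atTop, cutoff R x = 1 :=
  (eventually_gt_atTop 0).and (eventually_ge_atTop ‖x‖) |>.mono fun _ hR =>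
    cutoff_eq_one hR.1 hR.2

theorem hasCompactSupport_cutoff [FiniteDimensional ℝ E] {R : ℝ} (hR : R ≠ 0) :
    HasCompactSupport (cutoff (E := E) R) :=
  (unitBump E).hasCompactSupport.comp_homeomorph (Homeomorph.smulOfNeZero R⁻¹ (inv_ne_zero hR))

theorem fderiv_cutoff (R : ℝ) (x : E) :
    fderiv ℝ (cutoff R) x = R⁻¹ • fderiv ℝ (unitBump E) (R⁻¹ • x) :=
  fderiv_comp_smul R⁻¹

theorem fderiv_cutoff_eq_zero {R : ℝ} (hR : 0 < R) {x : E} (hx : ‖x‖ < R) :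
    fderiv ℝ (cutoff R) x = 0 := by
  have h_const : cutoff R =ᶠ[𝓝 x] fun _ => 1 := by
    filter_upwards [isOpen_ball.mem_nhds (mem_ball_zero_iff.2 hx)] with y hy
    exact cutoff_eq_one hR (mem_ball_zero_iff.1 hy).le
  rw [h_const.fderiv_eq, fderiv_const_apply]

variable [MeasurableSpace E] [BorelSpace E] {μ : Measure E}

theorem tendsto_integral_cutoff_mul {f : E → ℝ} (hf : Integrable f μ) :
    Tendsto (fun R => ∫ x, cutoff R x * f x ∂μ) atTop (𝓝 (∫ x, f x ∂μ)) := by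
  refine tendsto_integral_filter_of_dominated_convergence (fun x => ‖f x‖)
    (Eventually.of_forall fun R =>
      (contDiff_cutoff (n := 0) R).continuous.aestronglyMeasurable.mul hf.1)
    (Eventually.of_forall fun R => Eventually.of_forall fun x => ?_) hf.norm
    (Eventually.of_forall fun x => ?_)
  · rw [norm_mul, Real.norm_of_nonneg (cutoff_nonneg R x)]
    exact mul_le_of_le_one_left (norm_nonneg _) (cutoff_le_one R x)
  · exact tendsto_const_nhds.congr' ((eventually_cutoff_eq_one x).mono fun R hR => by
      simp only [hR, one_mul])

variable [FiniteDimensional ℝ E]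

theorem integrable_cutoff_mul [IsFiniteMeasureOnCompacts μ] {R : ℝ} (hR : R ≠ 0) {f : E → ℝ}
    (hf : Continuous f) : Integrable (fun x => cutoff R x * f x) μ :=
  ((contDiff_cutoff (n := 0) R).continuous.mul hf).integrable_of_hasCompactSupport
    (hasCompactSupport_cutoff hR).mul_right

variable [μ.IsAddHaarMeasure]

theorem integral_cutoff_mul_fderiv {R : ℝ} (hR : R ≠ 0)
    {g : E → ℝ} (hg : ContDiff ℝ 1 g) (v : E) :
    ∫ x, cutoff R x * fderiv ℝ g x v ∂μ = -∫ x, fderiv ℝ (cutoff R) x v * g x ∂μ := by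
  have hχ := contDiff_cutoff (E := E) (n := 1) R
  refine integral_mul_fderiv_eq_neg_fderiv_mul_of_integrable ?_
    (integrable_cutoff_mul hR ((hg.continuous_fderiv one_ne_zero).clm_apply continuous_const))
    (integrable_cutoff_mul hR hg.continuous)
    (fun x _ => hχ.differentiable one_ne_zero x) (fun x _ => hg.differentiable one_ne_zero x)
  exact (((hχ.continuous_fderiv one_ne_zero).clm_apply continuous_const).mul
    hg.continuous).integrable_of_hasCompactSupport
    ((hasCompactSupport_cutoff hR).fderiv_apply ℝ v).mul_right

theorem integral_sq_fderiv_cutoff_le (hd : finrank ℝ E ≤ 2) {R : ℝ} (hR : 1 ≤ R) (v : E) :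
    ∫ x, fderiv ℝ (cutoff R) x v ^ 2 ∂μ ≤ ∫ x, fderiv ℝ (unitBump E) x v ^ 2 ∂μ := by
  have hR₀ : 0 < R := by linarith
  have h_scale : ∫ x, fderiv ℝ (cutoff R) x v ^ 2 ∂μ
      = R ^ finrank ℝ E / R ^ 2 * ∫ x, fderiv ℝ (unitBump E) x v ^ 2 ∂μ := by
    simp_rw [fderiv_cutoff, smul_apply, smul_eq_mul, mul_pow, integral_const_mul]
    rw [Measure.integral_comp_inv_smul_of_nonneg μ (fun y => fderiv ℝ (unitBump E) y v ^ 2)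
      hR₀.le, smul_eq_mul]
    ring
  rw [h_scale]
  refine mul_le_of_le_one_left (integral_nonneg fun _ => sq_nonneg _) ?_
  exact div_le_one_of_le₀ (pow_le_pow_right₀ hR hd) (by positivity)

theorem abs_integral_fderiv_cutoff_mul_le (hd : finrank ℝ E ≤ 2) {R : ℝ} (hR : 1 ≤ R)
    {g : E → ℝ} (hg : MemLp g 2 μ) (v : E) :
    |∫ x, fderiv ℝ (cutoff R) x v * g x ∂μ|
      ≤ √(∫ x, fderiv ℝ (unitBump E) x v ^ 2 ∂μ) * √(∫ x in (ball 0 R)ᶜ, g x ^ 2 ∂μ) := by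
  have hR₀ : 0 < R := by linarith
  set w : E → ℝ := fun x => fderiv ℝ (cutoff R) x v
  have hw : MemLp w 2 μ :=
    (((contDiff_cutoff (n := 1) R).continuous_fderiv one_ne_zero).clm_apply
      continuous_const).memLp_of_hasCompactSupport
      ((hasCompactSupport_cutoff hR₀.ne').fderiv_apply ℝ v)
  have h_outer : ∫ x, w x * g x ∂μ = ∫ x in (ball 0 R)ᶜ, w x * g x ∂μ := by
    refine (setIntegral_eq_integral_of_forall_compl_eq_zero fun x hx => ?_).symm
    rw [notMem_compl_iff, mem_ball_zero_iff] at hx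
    simp [w, fderiv_cutoff_eq_zero hR₀ hx]
  rw [h_outer]
  refine (abs_integral_mul_le_sqrt_mul_sqrt (hw.restrict _) (hg.restrict _)).trans ?_
  gcongr
  calc ∫ x in (ball 0 R)ᶜ, w x ^ 2 ∂μ ≤ ∫ x, w x ^ 2 ∂μ :=
        setIntegral_le_integral hw.integrable_sq (Eventually.of_forall fun _ => sq_nonneg _)
    _ ≤ _ := integral_sq_fderiv_cutoff_le hd hR v

end Cutoff

theorem integral_sum_fderiv_eq_zero_of_memLp_two {E : Type*} [NormedAddCommGroup E]
    [InnerProductSpace ℝ E] [FiniteDimensional ℝ E] [MeasurableSpace E] [BorelSpace E]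
    {μ : Measure E} [μ.IsAddHaarMeasure] (hd : finrank ℝ E ≤ 2) {ι : Type*} [Fintype ι]
    {g : ι → E → ℝ} (v : ι → E) (hg : ∀ j, ContDiff ℝ 1 (g j)) (hg₂ : ∀ j, MemLp (g j) 2 μ)
    (hdiv : Integrable (fun x => ∑ j, fderiv ℝ (g j) x (v j)) μ) :
    ∫ x, ∑ j, fderiv ℝ (g j) x (v j) ∂μ = 0 := by
  have h_parts : ∀ R : ℝ, R ≠ 0 → ∫ x, cutoff R x * ∑ j, fderiv ℝ (g j) x (v j) ∂μ
      = -∑ j, ∫ x, fderiv ℝ (cutoff R) x (v j) * g j x ∂μ := fun R hR => by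
    simp_rw [Finset.mul_sum]
    rw [integral_finsetSum _ fun j _ => integrable_cutoff_mul hR
      (((hg j).continuous_fderiv one_ne_zero).clm_apply continuous_const)]
    simp_rw [integral_cutoff_mul_fderiv hR (hg _), Finset.sum_neg_distrib]
  have h_boundary : ∀ j, Tendsto (fun R => ∫ x, fderiv ℝ (cutoff R) x (v j) * g j x ∂μ)
      atTop (𝓝 0) := fun j => by
    have h_tail := ((continuous_sqrt.tendsto 0).comp
      (tendsto_setIntegral_compl_ball_atTop (hg₂ j).integrable_sq 0)).const_mul
      √(∫ x, fderiv ℝ (unitBump E) x (v j) ^ 2 ∂μ)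
    rw [sqrt_zero, mul_zero] at h_tail
    exact squeeze_zero_norm' ((eventually_ge_atTop 1).mono fun R hR =>
      abs_integral_fderiv_cutoff_mul_le hd hR (hg₂ j) (v j)) h_tail
  have h_lim : Tendsto (fun R => ∫ x, cutoff R x * ∑ j, fderiv ℝ (g j) x (v j) ∂μ)
      atTop (𝓝 0) := by
    simpa using ((tendsto_finsetSum _ fun j _ => h_boundary j).neg).congr'
      ((eventually_ne_atTop 0).mono fun R hR => (h_parts R hR).symm)
  exact tendsto_nhds_unique (tendsto_integral_cutoff_mul hdiv) h_lim

section Partials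

variable {E ι : Type*} [NormedAddCommGroup E] [NormedSpace ℝ E] [Fintype ι]
  {u : E → EuclideanSpace ℝ ι}

def evalComponentCLM (v : E) (k : ι) : (E →L[ℝ] EuclideanSpace ℝ ι) →L[ℝ] ℝ :=
  (EuclideanSpace.proj k).comp (ContinuousLinearMap.apply ℝ _ v)

theorem contDiff_fderiv_apply_apply (hu : ContDiff ℝ 2 u) (v : E) (k : ι) :
    ContDiff ℝ 1 fun y => fderiv ℝ u y v k :=
  (evalComponentCLM v k).contDiff.comp (hu.fderiv_right le_rfl)

theorem fderiv_fderiv_apply_apply (hu : ContDiff ℝ 2 u) (x v w : E) (k : ι) :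
    fderiv ℝ (fun y => fderiv ℝ u y v k) x w = fderiv ℝ (fderiv ℝ u) x w v k := by
  have hDu : DifferentiableAt ℝ (fderiv ℝ u) x :=
    (hu.fderiv_right (m := 1) le_rfl).differentiable one_ne_zero x
  rw [show (fun y => fderiv ℝ u y v k) = evalComponentCLM v k ∘ fderiv ℝ u from rfl,
    ((evalComponentCLM v k).hasFDerivAt.comp x hDu.hasFDerivAt).fderiv]
  rfl

theorem fderiv_fderiv_apply_apply_comm (hu : ContDiff ℝ 2 u) (x v w : E) (k : ι) :
    fderiv ℝ (fun y => fderiv ℝ u y v k) x w = fderiv ℝ (fun y => fderiv ℝ u y w k) x v := by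
  rw [fderiv_fderiv_apply_apply hu, fderiv_fderiv_apply_apply hu,
    (hu.contDiffAt.isSymmSndFDerivAt (by simp)).eq]

theorem memLp_fderiv_apply_apply [MeasurableSpace E] {μ : Measure E}
    (hDu : MemLp (fderiv ℝ u) 2 μ) (v : E) (k : ι) :
    MemLp (fun y => fderiv ℝ u y v k) 2 μ :=
  (evalComponentCLM v k).comp_memLp' hDu

end Partials

theorem fderiv_div2 {u : E2 → E2} (hu : ContDiff ℝ 2 u) (x : E2) :
    fderiv ℝ (div2 u) x = ∑ j, fderiv ℝ (fun y => fderiv ℝ u y (e2 j) j) x :=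
  (HasFDerivAt.fun_sum fun j _ =>
    ((contDiff_fderiv_apply_apply hu (e2 j) j).differentiable one_ne_zero x).hasFDerivAt).fderiv

def momentumStress (μ lam : ℝ) (u : E2 → E2) (P : E2 → ℝ) (i j : Fin 2) (y : E2) : ℝ :=
  μ * fderiv ℝ u y (e2 j) i + (μ + lam) * fderiv ℝ u y (e2 i) j - if i = j then P y else 0

section MomentumStress

variable {μ lam : ℝ} {u : E2 → E2} {P : E2 → ℝ}

theorem contDiff_momentumStress (hu : ContDiff ℝ 2 u) (hP : ContDiff ℝ 1 P) (i j : Fin 2) :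
    ContDiff ℝ 1 (momentumStress μ lam u P i j) := by
  refine ((contDiff_const.mul (contDiff_fderiv_apply_apply hu _ _)).add
    (contDiff_const.mul (contDiff_fderiv_apply_apply hu _ _))).sub ?_
  split_ifs
  exacts [hP, contDiff_const]

theorem memLp_momentumStress (hDu : MemLp (fderiv ℝ u) 2) (hP : MemLp P 2) (i j : Fin 2) :
    MemLp (momentumStress μ lam u P i j) 2 := by
  refine (((memLp_fderiv_apply_apply hDu _ _).const_mul μ).add
    ((memLp_fderiv_apply_apply hDu _ _).const_mul (μ + lam))).sub ?_
  split_ifs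
  exacts [hP, MemLp.zero]

theorem fderiv_momentumStress (hu : ContDiff ℝ 2 u) (hP : ContDiff ℝ 1 P) (i j : Fin 2)
    (x w : E2) :
    fderiv ℝ (momentumStress μ lam u P i j) x w
      = μ * fderiv ℝ (fun y => fderiv ℝ u y (e2 j) i) x w
        + (μ + lam) * fderiv ℝ (fun y => fderiv ℝ u y (e2 i) j) x w
        - if i = j then fderiv ℝ P x w else 0 := by
  have hD : ∀ v k, DifferentiableAt ℝ (fun y => fderiv ℝ u y v k) x := fun v k =>
    (contDiff_fderiv_apply_apply hu v k).differentiable one_ne_zero x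
  have h_lin := ((hD (e2 j) i).hasFDerivAt.const_mul μ).fun_add
    ((hD (e2 i) j).hasFDerivAt.const_mul (μ + lam))
  unfold momentumStress
  split_ifs
  · rw [(h_lin.fun_sub (hP.differentiable one_ne_zero x).hasFDerivAt).fderiv]
    simp
  · rw [(h_lin.fun_sub (hasFDerivAt_const 0 x)).fderiv]
    simp

theorem NSflux_apply_eq_sum_fderiv (hu : ContDiff ℝ 2 u) (hP : ContDiff ℝ 1 P) (x : E2)
    (i : Fin 2) :
    NSflux μ lam u P x i = ∑ j, fderiv ℝ (momentumStress μ lam u P i j) x (e2 j) := by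
  simp_rw [fderiv_momentumStress hu hP, fderiv_fderiv_apply_apply_comm hu x (e2 i) (e2 _)]
  rw [Finset.sum_sub_distrib, Finset.sum_add_distrib, Finset.sum_ite_eq, ← Finset.mul_sum,
    ← Finset.mul_sum, if_pos (Finset.mem_univ i)]
  simp [NSflux, lapVec, fderiv_div2 hu]

end MomentumStress

theorem momentum_flux_cancellation_general (μ lam : ℝ)
    (u : E2 → E2) (hu : ContDiff ℝ 2 u)
    (hgrad : Integrable (fun x => ‖fderiv ℝ u x‖ ^ 2))
    (P : E2 → ℝ) (hP : ContDiff ℝ 1 P) (hP2 : Integrable (fun x => (P x) ^ 2))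
    (hF : Integrable (NSflux μ lam u P)) :
    ∫ x : E2, NSflux μ lam u P x = 0 := by
  have hDu : MemLp (fderiv ℝ u) 2 :=
    (memLp_two_iff_integrable_sq_norm
      (hu.continuous_fderiv two_ne_zero).aestronglyMeasurable).2 hgrad
  have hP₂ : MemLp P 2 :=
    (memLp_two_iff_integrable_sq hP.continuous.aestronglyMeasurable).2 hP2
  ext i
  have hFi : Integrable fun x => NSflux μ lam u P x i :=
    (EuclideanSpace.proj (𝕜 := ℝ) i).integrable_comp hF
  simp_rw [NSflux_apply_eq_sum_fderiv hu hP] at hFi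
  calc (∫ x, NSflux μ lam u P x) i = ∫ x, NSflux μ lam u P x i :=
        ((EuclideanSpace.proj (𝕜 := ℝ) i).integral_comp_comm hF).symm
    _ = ∫ x, ∑ j, fderiv ℝ (momentumStress μ lam u P i j) x (e2 j) := by
        simp_rw [NSflux_apply_eq_sum_fderiv hu hP]
    _ = 0 := integral_sum_fderiv_eq_zero_of_memLp_two finrank_euclideanSpace_fin.le e2
        (contDiff_momentumStress hu hP i) (memLp_momentumStress hDu hP₂ i) hFi

/-- Cancellation property (3.9)/(zer) of the paper: if u is C² with ∇u ∈ L²(ℝ²), P is C¹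
with P ∈ L²(ℝ²), and F = μΔu + (μ+λ)∇(div u) − ∇P is integrable, then ∫_{ℝ²} F dx = 0. -/
theorem momentum_flux_cancellation (μ lam : ℝ) (hμ : 0 < μ) (hlam : 0 ≤ μ + lam)
    (u : E2 → E2) (hu : ContDiff ℝ 2 u)
    (hgrad : Integrable (fun x => ‖fderiv ℝ u x‖ ^ 2))
    (P : E2 → ℝ) (hP : ContDiff ℝ 1 P) (hP2 : Integrable (fun x => (P x) ^ 2))
    (hF : Integrable (NSflux μ lam u P)) :
    ∫ x : E2, NSflux μ lam u P x = 0 :=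
  momentum_flux_cancellation_general μ lam u hu hgrad P hP hP2 hF

end
end
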